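/- For a binary string b = b_1 ... b_n of length n, let f(b) be the binary string c_1 c_2 ... c_{2n-1} c_{2n} of length 2n where the pair c_{2i-1} c_{2i} equals 01 if b_i = 0 and equals 10 if b_i = 1. Then for all binary strings b, b' of length n, the following are equivalent: (1) f(b') is obtained from f(b) by a transposition (i.e., by exchanging the entries at two positions p < q with c_p ≠ c_q); (2) f(b') is obtained from f(b) by a swap (a transposition with q = p + 1); (3) the Hamming distance between b and b' equals 1. -/
import Mathlib

/-- The combination `f(b) = c_1 c_2 ... c_{2n}` (as a binary string `Fin (2n) → Bool`,
positions indexed from 0): the `i`-th pair of positions holds `01` if `b_i = 0` and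
`10` if `b_i = 1`. -/
def pairString {n : ℕ} (b : Fin n → Bool) : Fin (2 * n) → Bool :=
  fun k =>
    if (k : ℕ) % 2 = 0 then b ⟨(k : ℕ) / 2, by omega⟩
    else !(b ⟨(k : ℕ) / 2, by omega⟩)

/-- `g` is obtained from `f` by a transposition: the entries at two positions `p < q`
holding different bits are exchanged, all other positions being unchanged. -/
def DiffByTransposition {m : ℕ} (f g : Fin m → Bool) : Prop :=
  ∃ (p q : ℕ) (hpq : p < q) (hq : q < m),
    f ⟨p, by omega⟩ ≠ f ⟨q, hq⟩ ∧
    ∀ r : Fin m, g r =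
      if (r : ℕ) = p then f ⟨q, hq⟩
      else if (r : ℕ) = q then f ⟨p, by omega⟩
      else f r

/-- `g` is obtained from `f` by a swap: a transposition of two adjacent positions. -/
def DiffBySwap {m : ℕ} (f g : Fin m → Bool) : Prop :=
  ∃ (p : ℕ) (hp : p + 1 < m),
    f ⟨p, by omega⟩ ≠ f ⟨p + 1, hp⟩ ∧
    ∀ r : Fin m, g r =
      if (r : ℕ) = p then f ⟨p + 1, hp⟩
      else if (r : ℕ) = p + 1 then f ⟨p, by omega⟩
      else f r

lemma pair_ne_iff {n : ℕ} (b b' : Fin n → Bool) (r : Fin (2 * n)) :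
    pairString b r ≠ pairString b' r ↔
      b ⟨(r : ℕ) / 2, by have := r.2; omega⟩ ≠ b' ⟨(r : ℕ) / 2, by have := r.2; omega⟩ := by
  unfold pairString
  split <;> simp

lemma pairString_two {n : ℕ} (b : Fin n → Bool) (i : Fin n) (h : 2 * (i : ℕ) < 2 * n) :
    pairString b ⟨2 * (i : ℕ), h⟩ = b i := by
  unfold pairString
  have h1 : (2 * (i : ℕ)) % 2 = 0 := by omega
  rw [if_pos h1]
  congr 1
  apply Fin.ext
  show (2 * (i : ℕ)) / 2 = (i : ℕ)
  omega

lemma pairString_two_add_one {n : ℕ} (b : Fin n → Bool) (i : Fin n) (h : 2 * (i : ℕ) + 1 < 2 * n) :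
    pairString b ⟨2 * (i : ℕ) + 1, h⟩ = !(b i) := by
  unfold pairString
  have h1 : ¬ (2 * (i : ℕ) + 1) % 2 = 0 := by omega
  rw [if_neg h1]
  congr 2
  apply Fin.ext
  show (2 * (i : ℕ) + 1) / 2 = (i : ℕ)
  omega

lemma swap_of_hamming {n : ℕ} (b b' : Fin n → Bool) (h : hammingDist b b' = 1) :
    DiffBySwap (pairString b) (pairString b') := by
  rw [hammingDist, Finset.card_eq_one] at h
  obtain ⟨i, hi⟩ := h
  have hib : b i ≠ b' i := by
    have : i ∈ ({i} : Finset (Fin n)) := Finset.mem_singleton_self i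
    rw [← hi, Finset.mem_filter] at this
    exact this.2
  have hother : ∀ j : Fin n, j ≠ i → b j = b' j := by
    intro j hj
    by_contra hne
    have : j ∈ ({i} : Finset (Fin n)) := by
      rw [← hi, Finset.mem_filter]; exact ⟨Finset.mem_univ _, hne⟩
    exact hj (Finset.mem_singleton.mp this)
  have hi2 : (i : ℕ) < n := i.2
  refine ⟨2 * i, by omega, ?_, ?_⟩
  · rw [pairString_two, pairString_two_add_one]
    cases b i <;> simp
  · intro r
    have hr2 : (r : ℕ) < 2 * n := r.2
    by_cases h1 : (r : ℕ) = 2 * i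
    · have hr : r = ⟨2 * (i : ℕ), by omega⟩ := Fin.ext h1
      rw [if_pos h1, hr, pairString_two b', pairString_two_add_one b]
      revert hib; cases b i <;> cases b' i <;> simp
    · by_cases h2 : (r : ℕ) = 2 * i + 1
      · have hr : r = ⟨2 * (i : ℕ) + 1, by omega⟩ := Fin.ext h2
        rw [if_neg h1, if_pos h2, hr, pairString_two_add_one b', pairString_two b]
        revert hib; cases b i <;> cases b' i <;> simp
      · rw [if_neg h1, if_neg h2]
        have hj : (⟨(r : ℕ) / 2, by omega⟩ : Fin n) ≠ i := by
          intro he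
          have : (r : ℕ) / 2 = (i : ℕ) := congrArg Fin.val he
          omega
        have := hother _ hj
        simp only [pairString, this]

lemma trans_of_swap {m : ℕ} (f g : Fin m → Bool) (h : DiffBySwap f g) :
    DiffByTransposition f g := by
  obtain ⟨p, hp, hne, hg⟩ := h
  exact ⟨p, p + 1, by omega, hp, hne, hg⟩

lemma hamming_of_trans {n : ℕ} (b b' : Fin n → Bool)
    (h : DiffByTransposition (pairString b) (pairString b')) :
    hammingDist b b' = 1 := by
  obtain ⟨p, q, hpq, hq, hne, hg⟩ := h
  have key : ∀ r : Fin (2 * n), pairString b' r ≠ pairString b r ↔ ((r : ℕ) = p ∨ (r : ℕ) = q) := by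
    intro r
    rw [hg r]
    by_cases h1 : (r : ℕ) = p
    · have hr : r = ⟨p, by omega⟩ := Fin.ext h1
      rw [if_pos h1]
      constructor
      · intro _; exact Or.inl h1
      · intro _; rw [hr]; exact fun he => hne he.symm
    · by_cases h2 : (r : ℕ) = q
      · have hr : r = ⟨q, hq⟩ := Fin.ext h2
        rw [if_neg h1, if_pos h2]
        constructor
        · intro _; exact Or.inr h2
        · intro _; rw [hr]; exact fun he => hne he
      · rw [if_neg h1, if_neg h2]
        simp [h1, h2]
  have hp2 : p < 2 * n := by omega
  have hpn : p / 2 < n := by omega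
  have hdiffat : ∀ i : Fin n, b i ≠ b' i ↔ (i : ℕ) = p / 2 := by
    intro i
    constructor
    · intro hne'
      have hi2 : (i : ℕ) < n := i.2
      have d1 : pairString b' ⟨2 * (i : ℕ), by omega⟩ ≠ pairString b ⟨2 * (i : ℕ), by omega⟩ := by
        rw [pairString_two b', pairString_two b]
        exact fun he => hne' he.symm
      have d2 : pairString b' ⟨2 * (i : ℕ) + 1, by omega⟩ ≠ pairString b ⟨2 * (i : ℕ) + 1, by omega⟩ := by
        rw [pairString_two_add_one b', pairString_two_add_one b]
        simp only [ne_eq, Bool.not_inj_iff]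
        exact fun he => hne' he.symm
      have m1 := (key _).mp d1
      have m2 := (key _).mp d2
      simp only at m1 m2
      omega
    · intro hip
      have dp : pairString b' ⟨p, by omega⟩ ≠ pairString b ⟨p, by omega⟩ := by
        rw [key]; exact Or.inl rfl
      rw [ne_comm, pair_ne_iff] at dp
      have : i = (⟨p / 2, by omega⟩ : Fin n) := Fin.ext hip
      rw [this]
      exact dp
  rw [hammingDist, Finset.card_eq_one]
  refine ⟨⟨p / 2, hpn⟩, ?_⟩
  ext j
  simp only [Finset.mem_filter, Finset.mem_univ, true_and, Finset.mem_singleton]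
  rw [hdiffat j]
  constructor
  · intro hj; exact Fin.ext hj
  · intro hj; rw [hj]

/-- For all binary strings `b, b'` of length `n`, the following are equivalent:
(1) `f(b')` is obtained from `f(b)` by a transposition; (2) `f(b')` is obtained from `f(b)`
by a swap; (3) the Hamming distance between `b` and `b'` equals 1. -/
theorem pairString_transposition_swap_iff (n : ℕ) (b b' : Fin n → Bool) :
    (DiffByTransposition (pairString b) (pairString b') ↔ hammingDist b b' = 1) ∧
    (DiffBySwap (pairString b) (pairString b') ↔ hammingDist b b' = 1) := by
  constructor
  · exact ⟨hamming_of_trans b b', fun h => trans_of_swap _ _ (swap_of_hamming b b' h)⟩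
  · exact ⟨fun h => hamming_of_trans b b' (trans_of_swap _ _ h), swap_of_hamming b b'⟩
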